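/- arXiv:1706.07105 — 2 statements merged into one kernel-verified Lean document; each statement's English description precedes it below -/
import Mathlib

section
/- Let u_1,...,u_K ∈ R^N be nonnegative vectors with ⟨u_i, u_i⟩ = 1 for all i, ⟨u_i, u_j⟩ = 0 for i ≠ j, and Σ_i (u_i u_i^T) e = e. Then for each i, the vector π_i := u_i u_i^T e has all components in {0,1}, the vectors π_1,...,π_K satisfy Σ_i π_i = e, and e^T π_i ≥ 1 for every i. -/
theorem assignment_vectors_from_onmf (N K : ℕ) (u : Fin K → Fin N → ℝ)
    (hu : ∀ i n, 0 ≤ u i n)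
    (hnorm : ∀ i, ∑ n, u i n * u i n = 1)
    (horth : ∀ i j, i ≠ j → ∑ n, u i n * u j n = 0)
    (hsum : ∀ n, ∑ i, (∑ m, u i m) * u i n = 1) :
    (∀ i n, (∑ m, u i m) * u i n = 0 ∨ (∑ m, u i m) * u i n = 1) ∧
      (∀ n, ∑ i, (∑ m, u i m) * u i n = 1) ∧
      (∀ i, 1 ≤ ∑ n, (∑ m, u i m) * u i n) := by
  -- supports are disjoint
  have hdisj : ∀ i j n, i ≠ j → u i n * u j n = 0 := by
    intro i j n hij
    have h0 := horth i j hij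
    have hterm : ∀ m ∈ Finset.univ, 0 ≤ u i m * u j m := fun m _ =>
      mul_nonneg (hu i m) (hu j m)
    exact (Finset.sum_eq_zero_iff_of_nonneg hterm).mp h0 n (Finset.mem_univ n)
  -- key: if u i n ≠ 0 then π i n = 1
  have hkey : ∀ i n, u i n ≠ 0 → (∑ m, u i m) * u i n = 1 := by
    intro i n hne
    have h := hsum n
    rw [Finset.sum_eq_single i] at h
    · exact h
    · intro j _ hji
      have : u j n = 0 := by
        have := hdisj i j n (Ne.symm hji)
        rcases mul_eq_zero.mp this with h1 | h1
        · exact absurd h1 hne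
        · exact h1
      simp [this]
    · simp
  refine ⟨fun i n => ?_, hsum, fun i => ?_⟩
  · by_cases h : u i n = 0
    · left; simp [h]
    · right; exact hkey i n h
  · -- there is n with u i n ≠ 0
    have : ∃ n, u i n ≠ 0 := by
      by_contra h
      push_neg at h
      have := hnorm i
      simp [h] at this
    obtain ⟨n, hn⟩ := this
    calc (1 : ℝ) = (∑ m, u i m) * u i n := (hkey i n hn).symm
      _ ≤ ∑ n, (∑ m, u i m) * u i n := by
          apply Finset.single_le_sum (f := fun n => (∑ m, u i m) * u i n)
          · intro k _
            exact mul_nonneg (Finset.sum_nonneg fun m _ => hu i m) (hu i k)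
          · exact Finset.mem_univ n
end

section
/- The optimal value of the SDP relaxation R1 is at least the optimal value of the SDP relaxation R2. Concretely: for any N×N matrices W_1, W_2 that are entrywise nonnegative, positive semidefinite, with tr(W_1) = 1, tr(W_2) = K−1, W_1 e + W_2 e = e, and e_1^T W_1 e = 1, the matrix Y = W_1 + W_2 is entrywise nonnegative, positive semidefinite, satisfies tr(Y) = K and Y e = e; hence tr(X^T X) − tr(X^T X W_1) − tr(X^T X W_2) = tr(X^T X) − tr(X^T X Y), so every feasible point of R1 gives a feasible point of R2 with equal objective value. -/
open Matrix

theorem R1_feasible_gives_R2_feasible (D N K : ℕ) (hN : 0 < N)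
    (X : Matrix (Fin D) (Fin N) ℝ)
    (W₁ W₂ : Matrix (Fin N) (Fin N) ℝ)
    (hW₁nn : ∀ p q, 0 ≤ W₁ p q) (hW₂nn : ∀ p q, 0 ≤ W₂ p q)
    (hW₁psd : W₁.PosSemidef) (hW₂psd : W₂.PosSemidef)
    (htr₁ : Matrix.trace W₁ = 1) (htr₂ : Matrix.trace W₂ = (K : ℝ) - 1)
    (hrow : W₁ *ᵥ (fun _ => (1 : ℝ)) + W₂ *ᵥ (fun _ => (1 : ℝ)) = fun _ => (1 : ℝ))
    (hsym : Pi.single (⟨0, hN⟩ : Fin N) (1 : ℝ) ⬝ᵥ (W₁ *ᵥ fun _ => (1 : ℝ)) = 1) :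
    (∀ p q, 0 ≤ (W₁ + W₂) p q) ∧ (W₁ + W₂).PosSemidef ∧
      Matrix.trace (W₁ + W₂) = (K : ℝ) ∧
      (W₁ + W₂) *ᵥ (fun _ => (1 : ℝ)) = (fun _ => (1 : ℝ)) ∧
      Matrix.trace (Xᵀ * X) - Matrix.trace (Xᵀ * X * W₁) - Matrix.trace (Xᵀ * X * W₂) =
        Matrix.trace (Xᵀ * X) - Matrix.trace (Xᵀ * X * (W₁ + W₂)) := by
  refine ⟨fun p q => by simpa using add_nonneg (hW₁nn p q) (hW₂nn p q),
    hW₁psd.add hW₂psd, ?_, ?_, ?_⟩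
  · simp [Matrix.trace_add, htr₁, htr₂]
  · rw [Matrix.add_mulVec]; exact hrow
  · rw [Matrix.mul_add, Matrix.trace_add]; ring
end
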